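/- The map π defined by [x,y] ↦ (x, -y-2x) on points and (x,y) ↦ [x+2, -y] on lines is a permutation of Ω = P ∪ L of finite order interchanging P and L, and π preserves the flag relation U_0 = E_0 ∪ F_0: if d([x,y],(k,q)) = 0 then the image pair is again at distance 0, i.e. π maps incident point-line pairs to incident line-point pairs. -/
import Mathlib


/-- `Ω = P ∪ L`. -/
abbrev BiaffOmega (p : ℕ) := (ZMod p × ZMod p) ⊕ (ZMod p × ZMod p)

/-- The map `π` : `[x,y] ↦ (x,-y-2x)` (point to line) and
`(x,y) ↦ [x+2,-y]` (line to point). -/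
def piMap (p : ℕ) : BiaffOmega p → BiaffOmega p
  | Sum.inl (x, y) => Sum.inr (x, -y - 2 * x)
  | Sum.inr (x, y) => Sum.inl (x + 2, -y)

/-- Inverse of `piMap`. -/
def piInv (p : ℕ) : BiaffOmega p → BiaffOmega p
  | Sum.inl (x, y) => Sum.inr (x - 2, -y)
  | Sum.inr (x, y) => Sum.inl (x, -y - 2 * x)

lemma piMap_bij (p : ℕ) : Function.Bijective (piMap p) := by
  have h1 : Function.LeftInverse (piInv p) (piMap p) := by
    rintro (⟨x, y⟩ | ⟨x, y⟩) <;> simp [piMap, piInv] <;> ring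
  have h2 : Function.RightInverse (piInv p) (piMap p) := by
    rintro (⟨x, y⟩ | ⟨x, y⟩) <;> simp [piMap, piInv] <;> ring
  exact ⟨h1.injective, h2.surjective⟩

/-- `π` is a permutation of `Ω` of finite order interchanging `P` and `L`,
and it maps incident point-line pairs to incident line-point pairs
(it preserves the flag relation `U₀ = E₀ ∪ F₀`). -/
theorem stmt16 (p : ℕ) (hp : p.Prime) (hodd : Odd p) :
    Function.Bijective (piMap p) ∧
    (∀ P : ZMod p × ZMod p, ∃ ℓ, piMap p (Sum.inl P) = Sum.inr ℓ) ∧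
    (∀ ℓ : ZMod p × ZMod p, ∃ P, piMap p (Sum.inr ℓ) = Sum.inl P) ∧
    (∃ n : ℕ, 0 < n ∧ (piMap p)^[n] = id) ∧
    (∀ x y k q : ZMod p, y = k * x + q → -q = x * (k + 2) + (-y - 2 * x)) := by
  haveI : NeZero p := ⟨hp.ne_zero⟩
  refine ⟨piMap_bij p, ?_, ?_, ?_, ?_⟩
  · rintro ⟨x, y⟩; exact ⟨_, rfl⟩
  · rintro ⟨x, y⟩; exact ⟨_, rfl⟩
  · set e : Equiv.Perm (BiaffOmega p) := Equiv.ofBijective _ (piMap_bij p)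
    refine ⟨orderOf e, orderOf_pos e, ?_⟩
    have h : ⇑(e ^ orderOf e) = (piMap p)^[orderOf e] := by
      rw [← Equiv.Perm.iterate_eq_pow]; rfl
    rw [← h, pow_orderOf_eq_one]; rfl
  · intro x y k q h; rw [h]; ring
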